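/- arXiv:math/0610507 — 2 statements merged into one kernel-verified Lean document; each statement's English description precedes it below -/
import Mathlib

section
/- A Stieltjes transform determines its representing pair uniquely: if a₁ + ∫ 1/(θ+x) dμ₁(x) = a₂ + ∫ 1/(θ+x) dμ₂(x) for all θ > 0, where a₁, a₂ ≥ 0 and μ₁, μ₂ are positive measures on [0,∞) with ∫ 1/(1+x) dμᵢ(x) < ∞, then a₁ = a₂ and μ₁ = μ₂. -/
/-!
Letting `θ → ∞` in the identity gives `a₁ = a₂` by dominated convergence. Differentiating the
transforms `n` times under the integral sign then shows that `∫ (θ + x)⁻¹ ^ (n + 1) dμᵢ` agree for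
all `n`; at `θ = 1` these are the moments of the finite measure `(1 + x)⁻¹ dμᵢ` pushed forward to
`[0, 1]` by `x ↦ (1 + x)⁻¹`. By the Weierstrass approximation theorem a finite measure on a compact
interval is determined by its moments, and `μᵢ` is recovered from that pushforward because
`t ↦ t⁻¹ - 1` inverts `x ↦ (1 + x)⁻¹` and the density `(1 + x)⁻¹` is positive on `[0, ∞)`.
-/
open MeasureTheory Set Filter Topology Polynomial

lemma ContinuousMap.continuous_integral {K : Type*} [TopologicalSpace K] [CompactSpace K]
    [MeasurableSpace K] [BorelSpace K] (π : Measure K) [IsFiniteMeasure π] :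
    Continuous fun f : C(K, ℝ) => ∫ t, f t ∂π :=
  (MeasureTheory.continuous_integral.comp (toLp (E := ℝ) 1 π ℝ).continuous).congr fun f =>
    integral_congr_ae (coeFn_toLp π f)

namespace MeasureTheory

lemma integral_eval_eq_of_forall_integral_pow_eq {K : Type*} [TopologicalSpace K] [CompactSpace K]
    [MeasurableSpace K] [OpensMeasurableSpace K] {π₁ π₂ : Measure K}
    [IsFiniteMeasure π₁] [IsFiniteMeasure π₂] {u : C(K, ℝ)}
    (h : ∀ n : ℕ, ∫ t, u t ^ n ∂π₁ = ∫ t, u t ^ n ∂π₂) (p : ℝ[X]) :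
    ∫ t, p.eval (u t) ∂π₁ = ∫ t, p.eval (u t) ∂π₂ := by
  have hint (π : Measure K) [IsFiniteMeasure π] (n : ℕ) :
      Integrable (fun t => p.coeff n * u t ^ n) π :=
    (BoundedContinuousFunction.mkOfCompact (p.coeff n • u ^ n)).integrable π
  simp only [eval_eq_sum_range, integral_finsetSum _ fun n _ => hint _ n, integral_const_mul, h]

theorem ext_of_forall_integral_pow_eq {K : Type*} [MetricSpace K] [CompactSpace K]
    [MeasurableSpace K] [BorelSpace K] {π₁ π₂ : Measure K} [IsFiniteMeasure π₁]
    [IsFiniteMeasure π₂] {u : C(K, ℝ)} (hu : Function.Injective u)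
    (h : ∀ n : ℕ, ∫ t, u t ^ n ∂π₁ = ∫ t, u t ^ n ∂π₂) : π₁ = π₂ := by
  have hclosed : IsClosed {f : C(K, ℝ) | ∫ t, f t ∂π₁ = ∫ t, f t ∂π₂} :=
    isClosed_eq (ContinuousMap.continuous_integral π₁)
    (ContinuousMap.continuous_integral π₂)
  have hpoly : (Algebra.adjoin ℝ {u} : Set C(K, ℝ)) ⊆ {f | ∫ t, f t ∂π₁ = ∫ t, f t ∂π₂} := by
    intro f hf
    rw [SetLike.mem_coe, Algebra.adjoin_singleton_eq_range_aeval] at hf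
    obtain ⟨p, rfl⟩ := hf
    change ∫ t, aeval u p t ∂π₁ = ∫ t, aeval u p t ∂π₂
    simpa only [aeval_continuousMap_apply] using integral_eval_eq_of_forall_integral_pow_eq h p
  have hdense : (Algebra.adjoin ℝ {u}).topologicalClosure = ⊤ :=
    ContinuousMap.subalgebra_topologicalClosure_eq_top_of_separatesPoints _
      fun x y hxy => ⟨u, ⟨u, Algebra.subset_adjoin rfl, rfl⟩, hu.ne hxy⟩
  refine ext_of_forall_integral_eq_of_IsFiniteMeasure fun f =>
    closure_minimal hpoly hclosed (?_ : f.toContinuousMap ∈ _)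
  rw [← Subalgebra.topologicalClosure_coe, hdense]
  trivial

theorem ext_of_forall_integral_pow_eq_of_ae_mem_Icc {ρ₁ ρ₂ : Measure ℝ} [IsFiniteMeasure ρ₁]
    [IsFiniteMeasure ρ₂] {a b : ℝ} (h₁ : ∀ᵐ t ∂ρ₁, t ∈ Icc a b) (h₂ : ∀ᵐ t ∂ρ₂, t ∈ Icc a b)
    (h : ∀ n : ℕ, ∫ t, t ^ n ∂ρ₁ = ∫ t, t ^ n ∂ρ₂) : ρ₁ = ρ₂ := by
  have hrestrict {ρ : Measure ℝ} (hρ : ∀ᵐ t ∂ρ, t ∈ Icc a b) :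
      (ρ.comap ((↑) : Icc a b → ℝ)).map (↑) = ρ := by
    rw [map_comap_subtype_coe measurableSet_Icc, Measure.restrict_eq_self_of_ae_mem hρ]
  have hmoment {ρ : Measure ℝ} (hρ : ∀ᵐ t ∂ρ, t ∈ Icc a b) (n : ℕ) :
      ∫ t : Icc a b, (t : ℝ) ^ n ∂(ρ.comap Subtype.val) = ∫ t, t ^ n ∂ρ := by
    rw [integral_subtype_comap measurableSet_Icc fun t => t ^ n,
      Measure.restrict_eq_self_of_ae_mem hρ]
  rw [← hrestrict h₁, ← hrestrict h₂]
  congr 1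
  exact ext_of_forall_integral_pow_eq (u := ⟨Subtype.val, continuous_subtype_val⟩)
    Subtype.val_injective fun n => (hmoment h₁ n).trans ((h n).trans (hmoment h₂ n).symm)

end MeasureTheory

namespace StieltjesTransform

variable {μ : Measure ℝ}

lemma measurable_inv_add (θ : ℝ) : Measurable fun x : ℝ => (θ + x)⁻¹ :=
  (measurable_const.add measurable_id).inv

lemma ae_nonneg_of_measure_Iio_eq_zero (h : μ (Iio 0) = 0) : ∀ᵐ x ∂μ, 0 ≤ x :=
  ae_iff.2 (measure_mono_null (fun _ hx => mem_Iio.2 (not_le.1 hx)) h)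

lemma inv_add_le {t x : ℝ} (ht : 0 < t) (hx : 0 ≤ x) : (t + x)⁻¹ ≤ (1 + t⁻¹) * (1 + x)⁻¹ := by
  rw [← div_eq_mul_inv, le_div_iff₀ (by positivity), inv_mul_le_iff₀ (by positivity)]
  field_simp
  nlinarith

lemma inv_add_pow_le {t s x : ℝ} (ht : 0 < t) (hts : t ≤ s) (hx : 0 ≤ x) (k : ℕ) :
    (s + x)⁻¹ ^ (k + 1) ≤ t⁻¹ ^ k * (1 + t⁻¹) * (1 + x)⁻¹ := by
  have hsx : 0 ≤ (s + x)⁻¹ := inv_nonneg.2 (by linarith)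
  calc (s + x)⁻¹ ^ (k + 1) = (s + x)⁻¹ ^ k * (s + x)⁻¹ := pow_succ _ _
    _ ≤ t⁻¹ ^ k * ((1 + t⁻¹) * (1 + x)⁻¹) := by
      refine mul_le_mul (pow_le_pow_left₀ hsx (inv_anti₀ ht (by linarith)) k) ?_ hsx
        (by positivity)
      exact (inv_anti₀ (by positivity) (by linarith)).trans (inv_add_le ht hx)
    _ = t⁻¹ ^ k * (1 + t⁻¹) * (1 + x)⁻¹ := by ring

lemma integrable_inv_one_add (hμ : ∀ᵐ x ∂μ, 0 ≤ x)
    (hfin : ∫⁻ x, ENNReal.ofReal (1 + x)⁻¹ ∂μ ≠ ⊤) :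
    Integrable (fun x => (1 + x)⁻¹) μ := by
  refine ⟨(measurable_inv_add _).aestronglyMeasurable, ?_⟩
  rw [hasFiniteIntegral_iff_ofReal]
  · exact hfin.lt_top
  · filter_upwards [hμ] with x hx using inv_nonneg.2 (by linarith)

lemma integrable_inv_add_pow (hμ : ∀ᵐ x ∂μ, 0 ≤ x) (hint : Integrable (fun x => (1 + x)⁻¹) μ)
    {θ : ℝ} (hθ : 0 < θ) (n : ℕ) :
    Integrable (fun x => (θ + x)⁻¹ ^ (n + 1)) μ := by
  refine (hint.const_mul (θ⁻¹ ^ n * (1 + θ⁻¹))).mono'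
    ((measurable_inv_add _).pow_const _).aestronglyMeasurable ?_
  filter_upwards [hμ] with x hx
  rw [Real.norm_of_nonneg (by positivity)]
  exact inv_add_pow_le hθ le_rfl hx n

lemma hasDerivAt_inv_add_pow {x s : ℝ} (hsx : s + x ≠ 0) (n : ℕ) :
    HasDerivAt (fun s => (s + x)⁻¹ ^ (n + 1)) (-(n + 1) * (s + x)⁻¹ ^ (n + 2)) s := by
  refine ((((hasDerivAt_id s).add_const x).inv hsx).pow (n + 1)).congr_deriv ?_
  simp only [id, Pi.inv_apply, Nat.add_sub_cancel, Nat.cast_succ]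
  rw [neg_div, div_eq_mul_inv, ← inv_pow]
  ring

lemma hasDerivAt_integral_inv_add_pow (hμ : ∀ᵐ x ∂μ, 0 ≤ x)
    (hint : Integrable (fun x => (1 + x)⁻¹) μ) {θ : ℝ} (hθ : 0 < θ) (n : ℕ) :
    HasDerivAt (fun s => ∫ x, (s + x)⁻¹ ^ (n + 1) ∂μ)
      (-(n + 1) * ∫ x, (θ + x)⁻¹ ^ (n + 2) ∂μ) θ := by
  set t := θ / 2
  have ht : 0 < t := half_pos hθ
  have hmeas (s : ℝ) (k : ℕ) : Measurable fun x => (s + x)⁻¹ ^ k :=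
    (measurable_inv_add s).pow_const k
  rw [← integral_const_mul]
  refine (hasDerivAt_integral_of_dominated_loc_of_deriv_le
    (F' := fun s x => -(n + 1) * (s + x)⁻¹ ^ (n + 2))
    (Ioi_mem_nhds (half_lt_self hθ)) (.of_forall fun s => (hmeas s _).aestronglyMeasurable)
    (integrable_inv_add_pow hμ hint hθ n) ((hmeas θ _).const_mul _).aestronglyMeasurable
    ?_ (hint.const_mul ((n + 1) * (t⁻¹ ^ (n + 1) * (1 + t⁻¹)))) ?_).2
  · filter_upwards [hμ] with x hx s hs
    have hts : t ≤ s := (mem_Ioi.1 hs).le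
    have hsx : 0 < s + x := by linarith
    rw [norm_mul, norm_neg, Real.norm_of_nonneg (by positivity),
      Real.norm_of_nonneg (by positivity), mul_assoc]
    gcongr
    exact inv_add_pow_le ht hts hx (n + 1)
  · filter_upwards [hμ] with x hx s hs
    exact hasDerivAt_inv_add_pow (by linarith [mem_Ioi.1 hs]) n

lemma tendsto_integral_inv_add_atTop (hμ : ∀ᵐ x ∂μ, 0 ≤ x)
    (hint : Integrable (fun x => (1 + x)⁻¹) μ) :
    Tendsto (fun θ => ∫ x, (θ + x)⁻¹ ∂μ) atTop (𝓝 0) := by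
  rw [← integral_zero ℝ ℝ]
  refine tendsto_integral_filter_of_dominated_convergence _
    (.of_forall fun θ => (measurable_inv_add _).aestronglyMeasurable) ?_ hint ?_
  · filter_upwards [eventually_ge_atTop 1] with θ hθ
    filter_upwards [hμ] with x hx
    rw [Real.norm_of_nonneg (inv_nonneg.2 (by linarith))]
    exact inv_anti₀ (by linarith) (by linarith)
  · filter_upwards with x
    exact (tendsto_atTop_add_const_right _ x tendsto_id).inv_tendsto_atTop

lemma integral_inv_add_pow_eq {μ₁ μ₂ : Measure ℝ} (hμ₁ : ∀ᵐ x ∂μ₁, 0 ≤ x) (hμ₂ : ∀ᵐ x ∂μ₂, 0 ≤ x)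
    (hint₁ : Integrable (fun x => (1 + x)⁻¹) μ₁) (hint₂ : Integrable (fun x => (1 + x)⁻¹) μ₂)
    (h : ∀ θ, 0 < θ → ∫ x, (θ + x)⁻¹ ∂μ₁ = ∫ x, (θ + x)⁻¹ ∂μ₂) (n : ℕ) :
    ∀ θ, 0 < θ → ∫ x, (θ + x)⁻¹ ^ (n + 1) ∂μ₁ = ∫ x, (θ + x)⁻¹ ^ (n + 1) ∂μ₂ := by
  induction n with
  | zero => simpa using h
  | succ n ih =>
    intro θ hθ
    have hderiv₁ := hasDerivAt_integral_inv_add_pow hμ₁ hint₁ hθ n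
    have hderiv₂ := hasDerivAt_integral_inv_add_pow hμ₂ hint₂ hθ n
    have := (hderiv₁.congr_of_eventuallyEq
      (eventually_of_mem (Ioi_mem_nhds hθ) fun s hs => (ih s hs).symm)).unique hderiv₂
    exact mul_left_cancel₀ (neg_ne_zero.2 n.cast_add_one_ne_zero) this

noncomputable def compactifiedMeasure (μ : Measure ℝ) : Measure ℝ :=
  (μ.withDensity fun x => ENNReal.ofReal (1 + x)⁻¹).map fun x => (1 + x)⁻¹

lemma isFiniteMeasure_compactifiedMeasure (hint : Integrable (fun x => (1 + x)⁻¹) μ) :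
    IsFiniteMeasure (compactifiedMeasure μ) :=
  have := isFiniteMeasure_withDensity_ofReal hint.2
  Measure.isFiniteMeasure_map _ _

lemma ae_mem_Icc_compactifiedMeasure (hμ : ∀ᵐ x ∂μ, 0 ≤ x) :
    ∀ᵐ t ∂compactifiedMeasure μ, t ∈ Icc 0 1 := by
  rw [compactifiedMeasure,
    ae_map_iff (p := (· ∈ Icc 0 1)) (measurable_inv_add 1).aemeasurable measurableSet_Icc]
  filter_upwards [(withDensity_absolutelyContinuous μ _).ae_le hμ] with x hx
  exact ⟨by positivity, inv_le_one_of_one_le₀ (by linarith)⟩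

lemma integral_pow_compactifiedMeasure (hμ : ∀ᵐ x ∂μ, 0 ≤ x) (n : ℕ) :
    ∫ t, t ^ n ∂compactifiedMeasure μ = ∫ x, (1 + x)⁻¹ ^ (n + 1) ∂μ := by
  rw [compactifiedMeasure, integral_map (measurable_inv_add 1).aemeasurable
    (continuous_pow n).aestronglyMeasurable, integral_withDensity_eq_integral_toReal_smul
    (measurable_inv_add 1).ennreal_ofReal (.of_forall fun _ => ENNReal.ofReal_lt_top)]
  refine integral_congr_ae ?_
  filter_upwards [hμ] with x hx
  rw [ENNReal.toReal_ofReal (inv_nonneg.2 (by linarith)), smul_eq_mul, pow_succ']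

lemma withDensity_map_compactifiedMeasure (hμ : ∀ᵐ x ∂μ, 0 ≤ x) :
    ((compactifiedMeasure μ).map fun t => t⁻¹ - 1).withDensity
      (fun x => (ENNReal.ofReal (1 + x)⁻¹)⁻¹) = μ := by
  -- a left inverse everywhere, also at `x = -1` since `0⁻¹ = 0`
  have hinv : (fun t : ℝ => t⁻¹ - 1) ∘ (fun x => (1 + x)⁻¹) = id := by
    ext x; simp
  rw [compactifiedMeasure, Measure.map_map (measurable_inv.sub_const 1) (measurable_inv_add 1),
    hinv, Measure.map_id]
  refine withDensity_inv_same (measurable_inv_add 1).ennreal_ofReal ?_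
    (.of_forall fun _ => ENNReal.ofReal_ne_top)
  filter_upwards [hμ] with x hx
  exact ENNReal.ofReal_pos.2 (inv_pos.2 (by linarith)) |>.ne'

lemma eq_of_forall_integral_inv_one_add_pow_eq {μ₁ μ₂ : Measure ℝ} (hμ₁ : ∀ᵐ x ∂μ₁, 0 ≤ x)
    (hμ₂ : ∀ᵐ x ∂μ₂, 0 ≤ x) (hint₁ : Integrable (fun x => (1 + x)⁻¹) μ₁)
    (hint₂ : Integrable (fun x => (1 + x)⁻¹) μ₂)
    (h : ∀ n : ℕ, ∫ x, (1 + x)⁻¹ ^ (n + 1) ∂μ₁ = ∫ x, (1 + x)⁻¹ ^ (n + 1) ∂μ₂) : μ₁ = μ₂ := by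
  have := isFiniteMeasure_compactifiedMeasure hint₁
  have := isFiniteMeasure_compactifiedMeasure hint₂
  have hcomp : compactifiedMeasure μ₁ = compactifiedMeasure μ₂ :=
    ext_of_forall_integral_pow_eq_of_ae_mem_Icc (ae_mem_Icc_compactifiedMeasure hμ₁)
      (ae_mem_Icc_compactifiedMeasure hμ₂) fun n => by
        rw [integral_pow_compactifiedMeasure hμ₁, integral_pow_compactifiedMeasure hμ₂, h]
  rw [← withDensity_map_compactifiedMeasure hμ₁, ← withDensity_map_compactifiedMeasure hμ₂, hcomp]

end StieltjesTransform

open StieltjesTransform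

theorem stmt_7_general (μ₁ μ₂ : Measure ℝ) (h₁ : μ₁ (Iio 0) = 0) (h₂ : μ₂ (Iio 0) = 0)
    (hint₁ : ∫⁻ x, ENNReal.ofReal (1 / (1 + x)) ∂μ₁ ≠ ⊤)
    (hint₂ : ∫⁻ x, ENNReal.ofReal (1 / (1 + x)) ∂μ₂ ≠ ⊤)
    (a₁ a₂ : ℝ)
    (heq : ∀ θ : ℝ, 0 < θ →
      a₁ + ∫ x, 1 / (θ + x) ∂μ₁ = a₂ + ∫ x, 1 / (θ + x) ∂μ₂) :
    a₁ = a₂ ∧ μ₁ = μ₂ := by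
  simp only [one_div] at hint₁ hint₂ heq
  have hμ₁ := ae_nonneg_of_measure_Iio_eq_zero h₁
  have hμ₂ := ae_nonneg_of_measure_Iio_eq_zero h₂
  have hI₁ := integrable_inv_one_add hμ₁ hint₁
  have hI₂ := integrable_inv_one_add hμ₂ hint₂
  have ha : a₁ = a₂ := by
    have hlim₁ := (tendsto_integral_inv_add_atTop hμ₁ hI₁).const_add a₁
    have hlim₂ := (tendsto_integral_inv_add_atTop hμ₂ hI₂).const_add a₂
    rw [add_zero] at hlim₁ hlim₂
    exact tendsto_nhds_unique (hlim₁.congr' (eventually_of_mem (Ioi_mem_atTop 0) heq)) hlim₂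
  subst ha
  refine ⟨rfl, eq_of_forall_integral_inv_one_add_pow_eq hμ₁ hμ₂ hI₁ hI₂ fun n => ?_⟩
  exact integral_inv_add_pow_eq hμ₁ hμ₂ hI₁ hI₂ (fun θ hθ => add_left_cancel (heq θ hθ)) n 1 one_pos

theorem stmt_7 (μ₁ μ₂ : Measure ℝ) (h₁ : μ₁ (Iio 0) = 0) (h₂ : μ₂ (Iio 0) = 0)
    (hint₁ : ∫⁻ x, ENNReal.ofReal (1 / (1 + x)) ∂μ₁ ≠ ⊤)
    (hint₂ : ∫⁻ x, ENNReal.ofReal (1 / (1 + x)) ∂μ₂ ≠ ⊤)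
    (a₁ a₂ : ℝ) (ha₁ : 0 ≤ a₁) (ha₂ : 0 ≤ a₂)
    (heq : ∀ θ : ℝ, 0 < θ →
      a₁ + ∫ x, 1 / (θ + x) ∂μ₁ = a₂ + ∫ x, 1 / (θ + x) ∂μ₂) :
    a₁ = a₂ ∧ μ₁ = μ₂ :=
  stmt_7_general μ₁ μ₂ h₁ h₂ hint₁ hint₂ a₁ a₂ heq
end

section
/- Uniqueness of the Lévy–Khintchine representation of a Bernstein function vanishing at 0: if b₁λ + ∫(1-e^{-λx})dν₁(x) = b₂λ + ∫(1-e^{-λx})dν₂(x) for all λ ≥ 0, where bᵢ ≥ 0 and νᵢ are positive measures on (0,∞) with ∫ min(x,1)dνᵢ(x) < ∞, then b₁ = b₂ and ν₁ = ν₂. -/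
/-!
Dividing by `λ` and letting `λ → ∞` kills the integral term (dominated convergence, with bound
`min x 1`), so `b₁ = b₂`, and then the integrals agree for every `λ ≥ 0`. Taking differences at
`λ = n + 1` and `λ = n` shows that the finite measures `(1 - e^{-x}) νᵢ(dx)` have the same Laplace
transform at every `n ∈ ℕ`. Pushed forward along `x ↦ e^{-x}`, they become measures on `[0, 1]` with
the same moments, hence equal by the Weierstrass approximation theorem. Since `1 - e^{-x} > 0` on
`(0, ∞)`, the density can be divided out, giving `ν₁ = ν₂`.
-/

open MeasureTheory Real Set Filter Topology

lemma Real.one_sub_exp_neg_mul_le {l x : ℝ} (hx : 0 ≤ x) :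
    1 - exp (-(l * x)) ≤ max l 1 * min x 1 := by
  have h₁ : 1 - exp (-(l * x)) ≤ l * x := by linarith [add_one_le_exp (-(l * x))]
  have h₂ : 1 - exp (-(l * x)) ≤ 1 := by linarith [exp_pos (-(l * x))]
  rcases le_total x 1 with hx1 | hx1
  · rw [min_eq_left hx1]; nlinarith [le_max_left l 1]
  · rw [min_eq_right hx1, mul_one]; exact h₂.trans (le_max_right l 1)

lemma Real.one_sub_exp_neg_mul_nonneg {l x : ℝ} (hl : 0 ≤ l) (hx : 0 ≤ x) :
    0 ≤ 1 - exp (-(l * x)) :=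
  sub_nonneg.2 <| exp_le_one_iff.2 <| neg_nonpos.2 <| mul_nonneg hl hx

namespace MeasureTheory

theorem Measure.ext_of_forall_integral_pow_eq {s : Set ℝ} [CompactSpace s]
    {μ ν : Measure s} [IsFiniteMeasure μ] [IsFiniteMeasure ν]
    (h : ∀ n : ℕ, ∫ x, (x : ℝ) ^ n ∂μ = ∫ x, (x : ℝ) ^ n ∂ν) : μ = ν := by
  let integralCLM (ρ : Measure s) [IsFiniteMeasure ρ] : C(s, ℝ) →L[ℝ] ℝ :=
    (L1.integralCLM (μ := ρ) (E := ℝ)).comp (ContinuousMap.toLp 1 ρ ℝ)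
  have integralCLM_apply (ρ : Measure s) [IsFiniteMeasure ρ] (f : C(s, ℝ)) :
      integralCLM ρ f = ∫ x, f x ∂ρ := by
    rw [← integral_congr_ae (ContinuousMap.coeFn_toLp (p := 1) ρ (𝕜 := ℝ) f)]
    exact (L1.integral_eq _).symm.trans (L1.integral_eq_integral _)
  let X : C(s, ℝ) := Polynomial.toContinuousMapOnAlgHom s Polynomial.X
  have hdense : Dense (Submodule.span ℝ (Submonoid.closure {X} : Set C(s, ℝ)) : Set C(s, ℝ)) := by
    rw [← Algebra.adjoin_eq_span, ← polynomialFunctions.eq_adjoin_X, dense_iff_closure_eq,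
      Subalgebra.coe_toSubmodule, ← Subalgebra.topologicalClosure_coe,
      polynomialFunctions.topologicalClosure]
    rfl
  have : integralCLM μ = integralCLM ν := by
    refine ContinuousLinearMap.ext_on hdense fun f hf ↦ ?_
    obtain ⟨n, rfl⟩ := Submonoid.mem_closure_singleton.1 hf
    simpa [integralCLM_apply, X] using h n
  refine ext_of_forall_integral_eq_of_IsFiniteMeasure fun f ↦ ?_
  have := congr($this f.toContinuousMap)
  rwa [integralCLM_apply, integralCLM_apply] at this

theorem Measure.ext_of_forall_integral_exp_neg_nat_mul_eq {μ ν : Measure ℝ}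
    [IsFiniteMeasure μ] [IsFiniteMeasure ν] (hμ : ∀ᵐ x ∂μ, 0 ≤ x) (hν : ∀ᵐ x ∂ν, 0 ≤ x)
    (h : ∀ n : ℕ, ∫ x, exp (-(n * x)) ∂μ = ∫ x, exp (-(n * x)) ∂ν) : μ = ν := by
  let g : ℝ → Icc (0 : ℝ) 1 := fun x ↦ projIcc 0 1 zero_le_one (exp (-x))
  have hg : Measurable g := (continuous_projIcc.comp (by fun_prop)).measurable
  have hg_apply {x : ℝ} (hx : 0 ≤ x) : (g x : ℝ) = exp (-x) :=
    congrArg Subtype.val <| projIcc_of_mem _ ⟨(exp_pos _).le, exp_le_one_iff.2 (neg_nonpos.2 hx)⟩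
  have moment_map {ρ : Measure ℝ} (hρ : ∀ᵐ x ∂ρ, 0 ≤ x) (n : ℕ) :
      ∫ y, (y : ℝ) ^ n ∂ρ.map g = ∫ x, exp (-(n * x)) ∂ρ := by
    rw [integral_map hg.aemeasurable (by fun_prop)]
    refine integral_congr_ae (hρ.mono fun x hx ↦ ?_)
    simp only [hg_apply hx, ← exp_nat_mul, mul_neg]
  have map_log_map {ρ : Measure ℝ} (hρ : ∀ᵐ x ∂ρ, 0 ≤ x) :
      (ρ.map g).map (fun y : Icc (0 : ℝ) 1 ↦ -log y) = ρ := by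
    rw [Measure.map_map (by fun_prop) hg]
    refine (Measure.map_congr (hρ.mono fun x hx ↦ ?_)).trans Measure.map_id
    simp [hg_apply hx]
  have hmap : μ.map g = ν.map g := Measure.ext_of_forall_integral_pow_eq fun n ↦ by
    rw [moment_map hμ, moment_map hν, h]
  rw [← map_log_map hμ, ← map_log_map hν, hmap]

section LevyMeasure

variable {ν : Measure ℝ}

lemma integrable_min_one_of_lintegral_ne_top (hν : ∀ᵐ x ∂ν, 0 ≤ x)
    (hint : ∫⁻ x, ENNReal.ofReal (min x 1) ∂ν ≠ ⊤) : Integrable (fun x ↦ min x 1) ν :=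
  (lintegral_ofReal_ne_top_iff_integrable (by fun_prop)
    (hν.mono fun _ hx ↦ le_min hx zero_le_one)).1 hint

lemma integrable_one_sub_exp_neg_mul (hν : ∀ᵐ x ∂ν, 0 ≤ x)
    (hint : Integrable (fun x ↦ min x 1) ν) {l : ℝ} (hl : 0 ≤ l) :
    Integrable (fun x ↦ 1 - exp (-(l * x))) ν :=
  (hint.const_mul (max l 1)).mono' (by fun_prop) <| hν.mono fun x hx ↦ by
    rw [norm_of_nonneg (one_sub_exp_neg_mul_nonneg hl hx)]
    exact one_sub_exp_neg_mul_le hx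

lemma tendsto_integral_one_sub_exp_neg_mul_div (hν : ∀ᵐ x ∂ν, 0 ≤ x)
    (hint : Integrable (fun x ↦ min x 1) ν) :
    Tendsto (fun l ↦ (∫ x, (1 - exp (-(l * x))) ∂ν) / l) atTop (𝓝 0) := by
  simp_rw [← integral_div]
  rw [← integral_zero ℝ ℝ]
  refine tendsto_integral_filter_of_dominated_convergence (fun x ↦ min x 1)
    (.of_forall fun _ ↦ by fun_prop) ?_ hint (hν.mono fun x hx ↦ ?_)
  · filter_upwards [eventually_ge_atTop 1] with l hl
    filter_upwards [hν] with x hx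
    rw [norm_of_nonneg (div_nonneg (one_sub_exp_neg_mul_nonneg (by linarith) hx) (by linarith)),
      div_le_iff₀ (by linarith)]
    exact (one_sub_exp_neg_mul_le hx).trans_eq (by rw [max_eq_left hl, mul_comm])
  · refine squeeze_zero' ?_ ?_ tendsto_inv_atTop_zero
    · filter_upwards [eventually_ge_atTop 0] with l hl
      exact div_nonneg (one_sub_exp_neg_mul_nonneg hl hx) hl
    · filter_upwards [eventually_gt_atTop 0] with l hl
      rw [← one_div]
      exact div_le_div_of_nonneg_right (by linarith [exp_pos (-(l * x))]) hl.le

lemma tendsto_mul_add_integral_one_sub_exp_neg_mul_div (hν : ∀ᵐ x ∂ν, 0 ≤ x)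
    (hint : Integrable (fun x ↦ min x 1) ν) (b : ℝ) :
    Tendsto (fun l ↦ (b * l + ∫ x, (1 - exp (-(l * x))) ∂ν) / l) atTop (𝓝 b) := by
  have := (tendsto_integral_one_sub_exp_neg_mul_div hν hint).const_add b
  rw [add_zero] at this
  refine this.congr' ((eventually_gt_atTop 0).mono fun l hl ↦ ?_)
  field_simp

lemma isFiniteMeasure_withDensity_one_sub_exp_neg (hν : ∀ᵐ x ∂ν, 0 ≤ x)
    (hint : Integrable (fun x ↦ min x 1) ν) :
    IsFiniteMeasure (ν.withDensity fun x ↦ ENNReal.ofReal (1 - exp (-x))) :=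
  isFiniteMeasure_withDensity_ofReal
    (by simpa using integrable_one_sub_exp_neg_mul hν hint zero_le_one :
      Integrable (fun x ↦ 1 - exp (-x)) ν).hasFiniteIntegral

lemma integral_exp_neg_mul_withDensity_one_sub_exp_neg (hν : ∀ᵐ x ∂ν, 0 ≤ x)
    (hint : Integrable (fun x ↦ min x 1) ν) {t : ℝ} (ht : 0 ≤ t) :
    ∫ x, exp (-(t * x)) ∂ν.withDensity (fun x ↦ ENNReal.ofReal (1 - exp (-x))) =
      ∫ x, (1 - exp (-((t + 1) * x))) ∂ν - ∫ x, (1 - exp (-(t * x))) ∂ν := by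
  rw [integral_withDensity_eq_integral_toReal_smul (by fun_prop)
      (.of_forall fun _ ↦ ENNReal.ofReal_lt_top),
    ← integral_sub (integrable_one_sub_exp_neg_mul hν hint (by linarith))
      (integrable_one_sub_exp_neg_mul hν hint ht)]
  refine integral_congr_ae (hν.mono fun x hx ↦ ?_)
  have hdensity : 0 ≤ 1 - exp (-x) := sub_nonneg.2 <| exp_le_one_iff.2 <| neg_nonpos.2 hx
  dsimp only
  rw [ENNReal.toReal_ofReal hdensity, smul_eq_mul, add_mul, one_mul, neg_add, exp_add]
  ring

lemma withDensity_one_sub_exp_neg_withDensity_inv (hν : ∀ᵐ x ∂ν, 0 < x) :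
    (ν.withDensity fun x ↦ ENNReal.ofReal (1 - exp (-x))).withDensity
      (fun x ↦ (ENNReal.ofReal (1 - exp (-x)))⁻¹) = ν :=
  withDensity_inv_same (by fun_prop)
    (hν.mono fun x hx ↦ by simpa using exp_lt_one_iff.2 (neg_lt_zero.2 hx))
    (.of_forall fun _ ↦ ENNReal.ofReal_ne_top)

end LevyMeasure

theorem Measure.eq_of_forall_integral_one_sub_exp_neg_mul_eq {ν₁ ν₂ : Measure ℝ}
    (hν₁ : ∀ᵐ x ∂ν₁, 0 < x) (hν₂ : ∀ᵐ x ∂ν₂, 0 < x)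
    (hint₁ : Integrable (fun x ↦ min x 1) ν₁) (hint₂ : Integrable (fun x ↦ min x 1) ν₂)
    (h : ∀ l : ℝ, 0 ≤ l → ∫ x, (1 - exp (-(l * x))) ∂ν₁ = ∫ x, (1 - exp (-(l * x))) ∂ν₂) :
    ν₁ = ν₂ := by
  have hν₁' := hν₁.mono fun _ ↦ le_of_lt
  have hν₂' := hν₂.mono fun _ ↦ le_of_lt
  have := isFiniteMeasure_withDensity_one_sub_exp_neg hν₁' hint₁
  have := isFiniteMeasure_withDensity_one_sub_exp_neg hν₂' hint₂
  rw [← withDensity_one_sub_exp_neg_withDensity_inv hν₁,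
    ← withDensity_one_sub_exp_neg_withDensity_inv hν₂,
    Measure.ext_of_forall_integral_exp_neg_nat_mul_eq
      ((withDensity_absolutelyContinuous _ _).ae_le hν₁')
      ((withDensity_absolutelyContinuous _ _).ae_le hν₂') fun n ↦ by
      rw [integral_exp_neg_mul_withDensity_one_sub_exp_neg hν₁' hint₁ n.cast_nonneg,
        integral_exp_neg_mul_withDensity_one_sub_exp_neg hν₂' hint₂ n.cast_nonneg,
        h _ (by positivity), h _ n.cast_nonneg]]

end MeasureTheory

theorem stmt_17_general (ν₁ ν₂ : Measure ℝ) (h₁ : ν₁ (Iic 0) = 0) (h₂ : ν₂ (Iic 0) = 0)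
    (hint₁ : ∫⁻ x, ENNReal.ofReal (min x 1) ∂ν₁ ≠ ⊤)
    (hint₂ : ∫⁻ x, ENNReal.ofReal (min x 1) ∂ν₂ ≠ ⊤)
    (b₁ b₂ : ℝ)
    (heq : ∀ l : ℝ, 0 ≤ l →
      b₁ * l + ∫ x, (1 - exp (-(l * x))) ∂ν₁
        = b₂ * l + ∫ x, (1 - exp (-(l * x))) ∂ν₂) :
    b₁ = b₂ ∧ ν₁ = ν₂ := by
  have hν₁ : ∀ᵐ x ∂ν₁, 0 < x := (measure_eq_zero_iff_ae_notMem.1 h₁).mono fun _ hx ↦ not_le.1 hx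
  have hν₂ : ∀ᵐ x ∂ν₂, 0 < x := (measure_eq_zero_iff_ae_notMem.1 h₂).mono fun _ hx ↦ not_le.1 hx
  have hν₁' := hν₁.mono fun _ ↦ le_of_lt
  have hν₂' := hν₂.mono fun _ ↦ le_of_lt
  have hm₁ := integrable_min_one_of_lintegral_ne_top hν₁' hint₁
  have hm₂ := integrable_min_one_of_lintegral_ne_top hν₂' hint₂
  have hb : b₁ = b₂ := tendsto_nhds_unique
    (tendsto_mul_add_integral_one_sub_exp_neg_mul_div hν₁' hm₁ b₁)
    ((tendsto_mul_add_integral_one_sub_exp_neg_mul_div hν₂' hm₂ b₂).congr'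
      ((eventually_ge_atTop 0).mono fun l hl ↦ by rw [← heq l hl]))
  subst hb
  exact ⟨rfl, Measure.eq_of_forall_integral_one_sub_exp_neg_mul_eq hν₁ hν₂ hm₁ hm₂
    fun l hl ↦ add_left_cancel (heq l hl)⟩

theorem stmt_17 (ν₁ ν₂ : Measure ℝ) (h₁ : ν₁ (Iic 0) = 0) (h₂ : ν₂ (Iic 0) = 0)
    (hint₁ : ∫⁻ x, ENNReal.ofReal (min x 1) ∂ν₁ ≠ ⊤)
    (hint₂ : ∫⁻ x, ENNReal.ofReal (min x 1) ∂ν₂ ≠ ⊤)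
    (b₁ b₂ : ℝ) (hb₁ : 0 ≤ b₁) (hb₂ : 0 ≤ b₂)
    (heq : ∀ l : ℝ, 0 ≤ l →
      b₁ * l + ∫ x, (1 - exp (-(l * x))) ∂ν₁
        = b₂ * l + ∫ x, (1 - exp (-(l * x))) ∂ν₂) :
    b₁ = b₂ ∧ ν₁ = ν₂ :=
  stmt_17_general ν₁ ν₂ h₁ h₂ hint₁ hint₂ b₁ b₂ heq
end
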